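/- Let k ≥ 1 and for each j = 1, …, k let 1 ≤ s_j ≤ n, i(j) ∈ W_{n,s_j}, d_j ≥ s_j + 1 − p_{λ^∨}(s_j) and c_j ≥ 1, and set d = Σ_{j=1}^{k} c_j d_j. Then the polynomial ∏_{j=1}^{k} e_{d_j}(u_{i(j)_1} − 1, …, u_{i(j)_{s_j}} − 1)^{c_j} − ∏_{j=1}^{k} h_{d_j}(u_{i(j)})^{c_j} has total degree at most d − 1 and vanishes under the evaluation u_1 = ⋯ = u_n = 1. -/
import Mathlib

open MvPolynomial Finset

/-- The `k`-th elementary symmetric polynomial in the variables indexed by `T ⊆ {1,…,n}`. -/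
noncomputable def esymmOn (n : ℕ) (T : Finset (Fin n)) (k : ℕ) : MvPolynomial (Fin n) ℤ :=
  ∑ A ∈ T.powersetCard k, ∏ i ∈ A, X i

/-- The dual-partition value `η_j = #{i : λ_i ≥ j}` (here `lam` is 0-indexed). -/
def eta (l : ℕ) (lam : ℕ → ℕ) (j : ℕ) : ℕ :=
  ((Finset.range l).filter fun i => j ≤ lam i).card

/-- `p_{λ^∨}(s) = η_{n-s+1} + ⋯ + η_n`. -/
def pdual (n l : ℕ) (lam : ℕ → ℕ) (s : ℕ) : ℕ :=
  ∑ j ∈ Finset.Icc (n - s + 1) n, eta l lam j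

/-- The generator `h_d(u_i)` of the K-theoretic Tanisaki ideal, for index set `T` and `q`. -/
noncomputable def hpoly (n : ℕ) (T : Finset (Fin n)) (q d : ℕ) : MvPolynomial (Fin n) ℤ :=
  if q = 0 then esymmOn n T d
  else ∑ k ∈ Finset.range (d + 1),
    MvPolynomial.C ((-1 : ℤ) ^ (d - k) * ((q + d - k - 1).choose (q - 1) : ℤ)) * esymmOn n T k

/-- The K-theoretic Tanisaki ideal `𝓘_λ`. -/
noncomputable def KTanisaki (n l : ℕ) (lam : ℕ → ℕ) : Ideal (MvPolynomial (Fin n) ℤ) :=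
  Ideal.span {p | ∃ s : ℕ, 1 ≤ s ∧ s ≤ n ∧ ∃ T : Finset (Fin n), T.card = s ∧
    ∃ d : ℕ, s + 1 - pdual n l lam s ≤ d ∧ p = hpoly n T (pdual n l lam s) d}

/-- The (cohomological) Tanisaki ideal `I_λ`. -/
noncomputable def Tanisaki (n l : ℕ) (lam : ℕ → ℕ) : Ideal (MvPolynomial (Fin n) ℤ) :=
  Ideal.span {p | ∃ s : ℕ, 1 ≤ s ∧ s ≤ n ∧ ∃ T : Finset (Fin n), T.card = s ∧
    ∃ d : ℕ, s + 1 - pdual n l lam s ≤ d ∧ p = esymmOn n T d}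

/-- The k-th elementary symmetric polynomial in the shifted variables u_i - 1, i ∈ T. -/
noncomputable def esymmShift (n : ℕ) (T : Finset (Fin n)) (k : ℕ) : MvPolynomial (Fin n) ℤ :=
  ∑ A ∈ T.powersetCard k, ∏ i ∈ A, (X i - 1)

/-! ### Auxiliary lemmas -/

section Aux

lemma totalDegree_sub_le' {σ : Type*} (p q : MvPolynomial σ ℤ) :
    (p - q).totalDegree ≤ max p.totalDegree q.totalDegree := by
  rw [sub_eq_add_neg]
  exact (MvPolynomial.totalDegree_add p (-q)).trans (by rw [MvPolynomial.totalDegree_neg])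

/-- The alternating binomial sum `G r s d = ∑ (-1)^m C(r+m,r) C(s, d-m)`. -/
noncomputable def Gaux (r s d : ℕ) : ℤ :=
  ∑ m ∈ Finset.range (d + 1), (-1 : ℤ) ^ m * ((r + m).choose r : ℤ) * (s.choose (d - m) : ℤ)

lemma Gaux_zero (r s : ℕ) : Gaux r s 0 = 1 := by simp [Gaux]

lemma Gaux_rec (r s d : ℕ) :
    Gaux (r + 1) s (d + 1) + Gaux (r + 1) s d = Gaux r s (d + 1) := by
  simp only [Gaux]
  rw [Finset.sum_range_succ' (fun m => (-1:ℤ)^m * (((r+1) + m).choose (r+1) : ℤ) * (s.choose (d+1-m) : ℤ)) (d+1),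
      Finset.sum_range_succ' (fun m => (-1:ℤ)^m * ((r + m).choose r : ℤ) * (s.choose (d+1-m) : ℤ)) (d+1)]
  have key : ∀ m ∈ Finset.range (d+1),
      ((-1:ℤ)^(m+1) * (((r+1) + (m+1)).choose (r+1) : ℤ) * (s.choose (d+1-(m+1)) : ℤ))
        + (-1:ℤ)^m * (((r+1) + m).choose (r+1) : ℤ) * (s.choose (d - m) : ℤ)
      = (-1:ℤ)^(m+1) * ((r + (m+1)).choose r : ℤ) * (s.choose (d+1-(m+1)) : ℤ) := by
    intro m _
    have h1 : d + 1 - (m+1) = d - m := by omega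
    have h2 : (r+1) + (m+1) = (r + 1 + m) + 1 := by omega
    have h3 : r + (m+1) = r + 1 + m := by omega
    rw [h1, h2, h3, Nat.choose_succ_succ (r+1+m) r]
    push_cast
    ring
  calc (∑ m ∈ Finset.range (d+1),
          (-1:ℤ)^(m+1) * (((r+1) + (m+1)).choose (r+1) : ℤ) * (s.choose (d+1-(m+1)) : ℤ))
        + (-1:ℤ)^0 * (((r+1) + 0).choose (r+1) : ℤ) * (s.choose (d+1-0) : ℤ)
        + ∑ m ∈ Finset.range (d+1), (-1:ℤ)^m * (((r+1) + m).choose (r+1) : ℤ) * (s.choose (d - m) : ℤ)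
      = (∑ m ∈ Finset.range (d+1),
          ((-1:ℤ)^(m+1) * (((r+1) + (m+1)).choose (r+1) : ℤ) * (s.choose (d+1-(m+1)) : ℤ)
            + (-1:ℤ)^m * (((r+1) + m).choose (r+1) : ℤ) * (s.choose (d - m) : ℤ)))
        + (-1:ℤ)^0 * (((r+1) + 0).choose (r+1) : ℤ) * (s.choose (d+1-0) : ℤ) := by
        rw [Finset.sum_add_distrib]; ring
    _ = (∑ m ∈ Finset.range (d+1),
          (-1:ℤ)^(m+1) * ((r + (m+1)).choose r : ℤ) * (s.choose (d+1-(m+1)) : ℤ))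
        + (-1:ℤ)^0 * ((r + 0).choose r : ℤ) * (s.choose (d+1-0) : ℤ) := by
        rw [Finset.sum_congr rfl key]
        simp
  
lemma Gaux_base (a d : ℕ) : Gaux 0 (a + 1) d = (a.choose d : ℤ) := by
  induction d with
  | zero => simp [Gaux]
  | succ d ih =>
    have h : Gaux 0 (a+1) (d+1) = ((a+1).choose (d+1) : ℤ) - Gaux 0 (a+1) d := by
      simp only [Gaux]
      rw [Finset.sum_range_succ' (fun m => (-1:ℤ)^m * ((0 + m).choose 0 : ℤ) * ((a+1).choose (d+1-m) : ℤ)) (d+1)]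
      simp only [Nat.choose_zero_right, Nat.cast_one, mul_one, pow_zero, one_mul,
        Nat.add_sub_cancel, Nat.sub_zero, Nat.succ_sub_succ]
      rw [Finset.sum_congr rfl (fun m _ => by rw [pow_succ])]
      have hneg : ∑ m ∈ Finset.range (d+1), (-1:ℤ)^m * (-1) * (((a+1)).choose (d-m) : ℤ)
          = -∑ m ∈ Finset.range (d+1), (-1:ℤ)^m * (((a+1)).choose (d-m) : ℤ) := by
        rw [← Finset.sum_neg_distrib]
        exact Finset.sum_congr rfl fun m _ => by ring
      rw [hneg]
      ring
    rw [h, ih]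
    have hp : (a+1).choose (d+1) = a.choose d + a.choose (d+1) := Nat.choose_succ_succ a d
    push_cast [hp]
    ring

lemma Gaux_val (r a d : ℕ) : Gaux r (r + 1 + a) d = (a.choose d : ℤ) := by
  induction r generalizing a d with
  | zero => rw [show 0 + 1 + a = a + 1 by omega]; exact Gaux_base a d
  | succ r ih =>
    induction d with
    | zero => rw [Gaux_zero, Nat.choose_zero_right, Nat.cast_one]
    | succ d ihd =>
      have hrec := Gaux_rec r (r + 1 + 1 + a) d
      have hs : r + 1 + 1 + a = r + 1 + (a + 1) := by omega
      have h1 : Gaux r (r + 1 + 1 + a) (d+1) = ((a+1).choose (d+1) : ℤ) := by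
        rw [hs]; exact ih (a+1) (d+1)
      have h2 : Gaux (r+1) (r + 1 + 1 + a) d = (a.choose d : ℤ) := ihd
      have hp : (a+1).choose (d+1) = a.choose d + a.choose (d+1) := Nat.choose_succ_succ a d
      have : Gaux (r+1) (r + 1 + 1 + a) (d+1)
          = ((a+1).choose (d+1) : ℤ) - (a.choose d : ℤ) := by
        rw [← h1, ← h2]; linarith [hrec]
      rw [this, hp]
      push_cast
      ring

end Aux

section Eval

lemma eval_one_esymmOn (n : ℕ) (T : Finset (Fin n)) (k : ℕ) :
    MvPolynomial.eval (fun _ => (1:ℤ)) (esymmOn n T k) = (T.card.choose k : ℤ) := by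
  rw [esymmOn, map_sum]
  have h : ∀ A ∈ T.powersetCard k, MvPolynomial.eval (fun _ => (1:ℤ)) (∏ i ∈ A, X i) = 1 := by
    intro A _; rw [map_prod]; simp
  rw [Finset.sum_congr rfl h, Finset.sum_const, Finset.card_powersetCard]
  simp

lemma eval_one_esymmShift (n : ℕ) (T : Finset (Fin n)) (d : ℕ) (hd : 1 ≤ d) :
    MvPolynomial.eval (fun _ => (1:ℤ)) (esymmShift n T d) = 0 := by
  rw [esymmShift, map_sum]
  apply Finset.sum_eq_zero
  intro A hA
  have hcard : A.card = d := (Finset.mem_powersetCard.mp hA).2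
  have hne : A.Nonempty := Finset.card_pos.mp (by omega)
  obtain ⟨i, hi⟩ := hne
  rw [map_prod]
  exact Finset.prod_eq_zero hi (by simp)

lemma eval_one_hpoly (n : ℕ) (T : Finset (Fin n)) (q d : ℕ)
    (hq : q ≤ T.card) (hd : T.card + 1 - q ≤ d) :
    MvPolynomial.eval (fun _ => (1:ℤ)) (hpoly n T q d) = 0 := by
  rcases Nat.eq_zero_or_pos q with h0 | hq1
  · subst h0
    rw [hpoly, if_pos rfl, eval_one_esymmOn, Nat.choose_eq_zero_of_lt (by omega)]
    simp
  · obtain ⟨r, rfl⟩ : ∃ r, q = r + 1 := ⟨q - 1, by omega⟩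
    obtain ⟨a, hs⟩ : ∃ a, T.card = r + 1 + a := ⟨T.card - (r+1), by omega⟩
    rw [hpoly, if_neg (by omega)]
    rw [map_sum]
    simp only [map_mul, eval_C, eval_one_esymmOn]
    rw [← Finset.sum_range_reflect
      (fun k => (-1:ℤ)^(d-k) * (((r+1) + d - k - 1).choose ((r+1) - 1) : ℤ) * (T.card.choose k : ℤ)) (d+1)]
    have heq : ∀ m ∈ Finset.range (d+1),
        (-1:ℤ)^(d-(d+1-1-m)) * (((r+1) + d - (d+1-1-m) - 1).choose ((r+1) - 1) : ℤ)
          * (T.card.choose (d+1-1-m) : ℤ)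
        = (-1:ℤ)^m * ((r + m).choose r : ℤ) * (T.card.choose (d - m) : ℤ) := by
      intro m hm
      have hm' : m ≤ d := by have := Finset.mem_range.mp hm; omega
      have e1 : d + 1 - 1 - m = d - m := by omega
      have e2 : d - (d - m) = m := by omega
      have e3 : (r+1) + d - (d - m) - 1 = r + m := by omega
      have e4 : (r+1) - 1 = r := by omega
      rw [e1, e2, e3, e4]
    rw [Finset.sum_congr rfl heq]
    have : (∑ m ∈ Finset.range (d+1),
        (-1:ℤ)^m * ((r + m).choose r : ℤ) * (T.card.choose (d - m) : ℤ)) = Gaux r T.card d := rfl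
    rw [this, hs, Gaux_val r a d, Nat.choose_eq_zero_of_lt (by omega)]
    simp

end Eval

section Degree

lemma esymmOn_totalDegree (n : ℕ) (T : Finset (Fin n)) (k : ℕ) :
    (esymmOn n T k).totalDegree ≤ k := by
  refine (MvPolynomial.totalDegree_finset_sum _ _).trans (Finset.sup_le fun A hA => ?_)
  have hcard := (Finset.mem_powersetCard.mp hA).2
  calc (∏ i ∈ A, X i : MvPolynomial (Fin n) ℤ).totalDegree
      ≤ ∑ i ∈ A, (X i : MvPolynomial (Fin n) ℤ).totalDegree :=
        MvPolynomial.totalDegree_finset_prod _ _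
    _ = A.card := by simp [MvPolynomial.totalDegree_X]
    _ = k := hcard

lemma Xsub1_totalDegree (n : ℕ) (i : Fin n) :
    ((X i - 1 : MvPolynomial (Fin n) ℤ)).totalDegree ≤ 1 := by
  refine (totalDegree_sub_le' _ _).trans ?_
  simp [MvPolynomial.totalDegree_X]

lemma prod_Xsub1_totalDegree (n : ℕ) (A : Finset (Fin n)) :
    (∏ i ∈ A, (X i - 1 : MvPolynomial (Fin n) ℤ)).totalDegree ≤ A.card := by
  refine (MvPolynomial.totalDegree_finset_prod _ _).trans ?_
  calc ∑ i ∈ A, (X i - 1 : MvPolynomial (Fin n) ℤ).totalDegree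
      ≤ ∑ _i ∈ A, 1 := Finset.sum_le_sum fun i _ => Xsub1_totalDegree n i
    _ = A.card := by simp

lemma esymmShift_totalDegree (n : ℕ) (T : Finset (Fin n)) (d : ℕ) :
    (esymmShift n T d).totalDegree ≤ d := by
  refine (MvPolynomial.totalDegree_finset_sum _ _).trans (Finset.sup_le fun A hA => ?_)
  have hcard := (Finset.mem_powersetCard.mp hA).2
  exact hcard ▸ prod_Xsub1_totalDegree n A

lemma shiftprod_sub_prod_totalDegree (n : ℕ) (A : Finset (Fin n)) :
    ((∏ i ∈ A, (X i - 1 : MvPolynomial (Fin n) ℤ)) - ∏ i ∈ A, X i).totalDegree ≤ A.card - 1 := by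
  induction A using Finset.induction_on with
  | empty => simp
  | @insert a A' ha ih =>
    rw [Finset.prod_insert ha, Finset.prod_insert ha]
    have key : (X a - 1) * (∏ i ∈ A', (X i - 1 : MvPolynomial (Fin n) ℤ)) - X a * ∏ i ∈ A', X i
        = X a * ((∏ i ∈ A', (X i - 1)) - ∏ i ∈ A', X i) - ∏ i ∈ A', (X i - 1) := by ring
    rw [key]
    rcases A'.eq_empty_or_nonempty with rfl | hne
    · simp only [Finset.prod_empty, sub_self, mul_zero, zero_sub,
        MvPolynomial.totalDegree_neg, MvPolynomial.totalDegree_one]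
      exact Nat.zero_le _
    · have hc : 1 ≤ A'.card := hne.card_pos
      have h1 : ((X a : MvPolynomial (Fin n) ℤ)
          * ((∏ i ∈ A', (X i - 1)) - ∏ i ∈ A', X i)).totalDegree ≤ A'.card := by
        refine (MvPolynomial.totalDegree_mul _ _).trans ?_
        rw [MvPolynomial.totalDegree_X]
        omega
      have h2 := prod_Xsub1_totalDegree n A'
      rw [Finset.card_insert_of_notMem ha]
      refine (totalDegree_sub_le' _ _).trans ?_
      rw [Nat.add_sub_cancel]
      exact max_le h1 h2

lemma esymmShift_sub_esymmOn_totalDegree (n : ℕ) (T : Finset (Fin n)) (d : ℕ) :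
    (esymmShift n T d - esymmOn n T d).totalDegree ≤ d - 1 := by
  rw [esymmShift, esymmOn, ← Finset.sum_sub_distrib]
  refine (MvPolynomial.totalDegree_finset_sum _ _).trans (Finset.sup_le fun A hA => ?_)
  have hcard := (Finset.mem_powersetCard.mp hA).2
  exact hcard ▸ shiftprod_sub_prod_totalDegree n A

lemma hpoly_sub_esymmOn_totalDegree (n : ℕ) (T : Finset (Fin n)) (q d : ℕ) :
    (hpoly n T q d - esymmOn n T d).totalDegree ≤ d - 1 := by
  rw [hpoly]
  split_ifs with h
  · simp
  · rw [Finset.sum_range_succ]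
    have e1 : d - d = 0 := by omega
    have e2 : q + d - d - 1 = q - 1 := by omega
    rw [e1, e2, pow_zero, Nat.choose_self, Nat.cast_one, mul_one, MvPolynomial.C_1, one_mul,
      add_sub_cancel_right]
    refine (MvPolynomial.totalDegree_finset_sum _ _).trans (Finset.sup_le fun k hk => ?_)
    have hk' := Finset.mem_range.mp hk
    refine (MvPolynomial.totalDegree_mul _ _).trans ?_
    have := esymmOn_totalDegree n T k
    rw [MvPolynomial.totalDegree_C]
    omega

lemma hpoly_totalDegree (n : ℕ) (T : Finset (Fin n)) (q d : ℕ) :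
    (hpoly n T q d).totalDegree ≤ d := by
  rw [hpoly]
  split_ifs with h
  · exact esymmOn_totalDegree n T d
  · refine (MvPolynomial.totalDegree_finset_sum _ _).trans (Finset.sup_le fun k hk => ?_)
    have hk' := Finset.mem_range.mp hk
    refine (MvPolynomial.totalDegree_mul _ _).trans ?_
    have := esymmOn_totalDegree n T k
    rw [MvPolynomial.totalDegree_C]
    omega

lemma esymmShift_sub_hpoly_totalDegree (n : ℕ) (T : Finset (Fin n)) (q d : ℕ) :
    (esymmShift n T d - hpoly n T q d).totalDegree ≤ d - 1 := by
  have h : esymmShift n T d - hpoly n T q d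
      = (esymmShift n T d - esymmOn n T d) - (hpoly n T q d - esymmOn n T d) := by ring
  rw [h]
  exact (totalDegree_sub_le' _ _).trans
    (max_le (esymmShift_sub_esymmOn_totalDegree n T d) (hpoly_sub_esymmOn_totalDegree n T q d))

lemma prod_sub_prod_totalDegree {σ : Type*} {ι : Type*} [DecidableEq ι] (S : Finset ι)
    (A B : ι → MvPolynomial σ ℤ) (D : ι → ℕ)
    (hA : ∀ j ∈ S, (A j).totalDegree ≤ D j)
    (hB : ∀ j ∈ S, (B j).totalDegree ≤ D j)
    (hAB : ∀ j ∈ S, (A j - B j).totalDegree ≤ D j - 1)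
    (hD : ∀ j ∈ S, 1 ≤ D j) :
    ((∏ j ∈ S, A j) - ∏ j ∈ S, B j).totalDegree ≤ (∑ j ∈ S, D j) - 1 := by
  induction S using Finset.induction_on with
  | empty => simp
  | @insert a S' ha ih =>
    rw [Finset.prod_insert ha, Finset.prod_insert ha, Finset.sum_insert ha]
    have key : A a * (∏ j ∈ S', A j) - B a * ∏ j ∈ S', B j
        = A a * ((∏ j ∈ S', A j) - ∏ j ∈ S', B j) + (A a - B a) * ∏ j ∈ S', B j := by ring
    rw [key]
    have hAa := hA a (Finset.mem_insert_self a S')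
    have hABa := hAB a (Finset.mem_insert_self a S')
    have hDa := hD a (Finset.mem_insert_self a S')
    rcases S'.eq_empty_or_nonempty with rfl | hne
    · simpa using hABa
    · have ih' := ih (fun j hj => hA j (Finset.mem_insert_of_mem hj))
        (fun j hj => hB j (Finset.mem_insert_of_mem hj))
        (fun j hj => hAB j (Finset.mem_insert_of_mem hj))
        (fun j hj => hD j (Finset.mem_insert_of_mem hj))
      have hS1 : 1 ≤ ∑ j ∈ S', D j := by
        calc 1 ≤ S'.card := hne.card_pos
          _ = ∑ _j ∈ S', 1 := by simp
          _ ≤ ∑ j ∈ S', D j := Finset.sum_le_sum fun j hj => hD j (Finset.mem_insert_of_mem hj)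
      have t1 : (A a * ((∏ j ∈ S', A j) - ∏ j ∈ S', B j)).totalDegree
          ≤ D a + ((∑ j ∈ S', D j) - 1) :=
        (MvPolynomial.totalDegree_mul _ _).trans (add_le_add hAa ih')
      have t2 : ((A a - B a) * ∏ j ∈ S', B j).totalDegree
          ≤ (D a - 1) + ∑ j ∈ S', D j := by
        refine (MvPolynomial.totalDegree_mul _ _).trans (add_le_add hABa ?_)
        exact (MvPolynomial.totalDegree_finset_prod _ _).trans
          (Finset.sum_le_sum fun j hj => hB j (Finset.mem_insert_of_mem hj))
      refine (MvPolynomial.totalDegree_add _ _).trans ?_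
      refine max_le (t1.trans ?_) (t2.trans ?_) <;> omega

lemma pow_sub_pow_totalDegree {σ : Type*} (P Q : MvPolynomial σ ℤ) (dd c : ℕ)
    (hP : P.totalDegree ≤ dd) (hQ : Q.totalDegree ≤ dd)
    (hPQ : (P - Q).totalDegree ≤ dd - 1) (hdd : 1 ≤ dd) :
    (P ^ c - Q ^ c).totalDegree ≤ c * dd - 1 := by
  have h := prod_sub_prod_totalDegree (Finset.range c) (fun _ => P) (fun _ => Q) (fun _ => dd)
    (fun _ _ => hP) (fun _ _ => hQ) (fun _ _ => hPQ) (fun _ _ => hdd)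
  simpa [Finset.prod_const, Finset.sum_const, Finset.card_range, mul_comm] using h

end Degree

section Pdual

lemma sum_tsub_le' {ι : Type*} [DecidableEq ι] (S : Finset ι) (f : ι → ℕ) (t : ℕ) :
    ∑ i ∈ S, (f i - t) ≤ (∑ i ∈ S, f i) - t := by
  induction S using Finset.induction_on with
  | empty => simp
  | @insert a S' ha ih =>
    rw [Finset.sum_insert ha, Finset.sum_insert ha]
    omega

lemma pdual_le (n l : ℕ) (lam : ℕ → ℕ) (s : ℕ) (hsn : s ≤ n)
    (hsum : ∑ i ∈ Finset.range l, lam i = n) :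
    pdual n l lam s ≤ s := by
  have h1 : pdual n l lam s
      = ∑ i ∈ Finset.range l, ((Finset.Icc (n-s+1) n).filter fun j => j ≤ lam i).card := by
    rw [pdual]
    simp only [eta, Finset.card_filter]
    rw [Finset.sum_comm]
  have h2 : ∀ i, ((Finset.Icc (n-s+1) n).filter fun j => j ≤ lam i).card ≤ lam i - (n - s) := by
    intro i
    have : ((Finset.Icc (n-s+1) n).filter fun j => j ≤ lam i)
        = Finset.Icc (n-s+1) (min n (lam i)) := by
      ext j
      simp only [Finset.mem_filter, Finset.mem_Icc]
      omega
    rw [this, Nat.card_Icc]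
    omega
  calc pdual n l lam s ≤ ∑ i ∈ Finset.range l, (lam i - (n - s)) := by
        rw [h1]; exact Finset.sum_le_sum fun i _ => h2 i
    _ ≤ (∑ i ∈ Finset.range l, lam i) - (n - s) := sum_tsub_le' _ _ _
    _ = s := by rw [hsum]; omega

end Pdual

/-- For k ≥ 1 and data s_j, i(j) ∈ W_{n,s_j}, d_j ≥ s_j + 1 − p_{λ^∨}(s_j),
c_j ≥ 1 (1 ≤ j ≤ k), with d = Σ c_j d_j, the polynomial
∏_j e_{d_j}(u_{i(j)} − 1)^{c_j} − ∏_j h_{d_j}(u_{i(j)})^{c_j}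
has total degree at most d − 1 and vanishes under the evaluation u_1 = ⋯ = u_n = 1. -/
theorem prod_esymmShift_sub_prod_hpoly_totalDegree_le_and_eval_one_eq_zero
    (n l : ℕ) (lam : ℕ → ℕ) (hn : 1 ≤ n)
    (hmono : ∀ i j : ℕ, i ≤ j → lam j ≤ lam i)
    (hpos : ∀ i < l, 0 < lam i) (hzero : ∀ i, l ≤ i → lam i = 0)
    (hsum : ∑ i ∈ Finset.range l, lam i = n)
    (k : ℕ) (hk : 1 ≤ k)
    (s d c : Fin k → ℕ) (T : Fin k → Finset (Fin n))
    (hs1 : ∀ j, 1 ≤ s j) (hsn : ∀ j, s j ≤ n) (hT : ∀ j, (T j).card = s j)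
    (hd : ∀ j, s j + 1 - pdual n l lam (s j) ≤ d j) (hc : ∀ j, 1 ≤ c j) :
    ((∏ j, esymmShift n (T j) (d j) ^ c j) -
        ∏ j, hpoly n (T j) (pdual n l lam (s j)) (d j) ^ c j).totalDegree
      ≤ (∑ j, c j * d j) - 1 ∧
    MvPolynomial.eval (fun _ => (1 : ℤ))
      ((∏ j, esymmShift n (T j) (d j) ^ c j) -
        ∏ j, hpoly n (T j) (pdual n l lam (s j)) (d j) ^ c j) = 0 := by
  have hq : ∀ j, pdual n l lam (s j) ≤ s j := fun j => pdual_le n l lam (s j) (hsn j) hsum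
  have hd1 : ∀ j, 1 ≤ d j := fun j => by have := hq j; have := hd j; omega
  constructor
  · refine le_trans ?_ (le_refl _)
    have := prod_sub_prod_totalDegree (σ := Fin n) (Finset.univ : Finset (Fin k))
      (fun j => esymmShift n (T j) (d j) ^ c j)
      (fun j => hpoly n (T j) (pdual n l lam (s j)) (d j) ^ c j)
      (fun j => c j * d j)
      (fun j _ => (MvPolynomial.totalDegree_pow _ _).trans
        (Nat.mul_le_mul_left (c j) (esymmShift_totalDegree n (T j) (d j))))
      (fun j _ => (MvPolynomial.totalDegree_pow _ _).trans
        (Nat.mul_le_mul_left (c j) (hpoly_totalDegree n (T j) _ (d j))))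
      (fun j _ => pow_sub_pow_totalDegree _ _ (d j) (c j)
        (esymmShift_totalDegree n (T j) (d j))
        (hpoly_totalDegree n (T j) _ (d j))
        (esymmShift_sub_hpoly_totalDegree n (T j) _ (d j)) (hd1 j))
      (fun j _ => Nat.one_le_iff_ne_zero.mpr (by
        have := hd1 j; have := hc j
        exact Nat.mul_ne_zero (by omega) (by omega)))
    exact this
  · set j0 : Fin k := ⟨0, hk⟩
    rw [map_sub]
    have hL : MvPolynomial.eval (fun _ => (1:ℤ)) (∏ j, esymmShift n (T j) (d j) ^ c j) = 0 := by
      rw [map_prod]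
      refine Finset.prod_eq_zero (Finset.mem_univ j0) ?_
      rw [map_pow, eval_one_esymmShift n (T j0) (d j0) (hd1 j0)]
      exact zero_pow (by have := hc j0; omega)
    have hR : MvPolynomial.eval (fun _ => (1:ℤ))
        (∏ j, hpoly n (T j) (pdual n l lam (s j)) (d j) ^ c j) = 0 := by
      rw [map_prod]
      refine Finset.prod_eq_zero (Finset.mem_univ j0) ?_
      rw [map_pow, eval_one_hpoly n (T j0) _ (d j0) (by rw [hT]; exact hq j0)
        (by rw [hT]; exact hd j0)]
      exact zero_pow (by have := hc j0; omega)
    rw [hL, hR, sub_zero]
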